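/- arXiv:1012.2130 — 4 statements merged into one kernel-verified Lean document; each statement's English description precedes it below -/
import Mathlib

section
/- Let G be a finite group and {U^μ}_μ a complete set of pairwise inequivalent irreducible unitary representations of G over ℂ, with U^μ : G → U(d_μ). Equip L²(G) = (G → ℂ) with the inner product ⟨f₁,f₂⟩ := (1/|G|) Σ_{h∈G} conj(f₁(h)) f₂(h) and the left-regular representation (T_g f)(h) := f(g⁻¹h). Define V : L²(G) → ⊕_μ ℂ^{d_μ}⊗ℂ^{d_μ} by (V f)_μ := (√d_μ/|G|) Σ_{h∈G} f(h) |U^μ(h)⟩⟩. Then V is a unitary isomorphism of Hilbert spaces and V ∘ T_g = (⊕_μ U^μ(g) ⊗ I_{d_μ}) ∘ V for every g ∈ G. -/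
/-!
Write `M` for the matrix with rows indexed by `(μ, i, j)`, columns indexed by `G` and entries
`√d_μ · U^μ(h)ᵢⱼ`, so that `V f = |G|⁻¹ • M f`. Schur's lemma, applied to the averaged
intertwiners `∑ₕ U^ν(h) E U^μ(h)⁻¹`, gives the orthogonality relations of matrix coefficients,
i.e. `M Mᴴ = |G| • 1`. Completeness `∑ d_μ² = |G|` makes `M` square, so also `Mᴴ M = |G| • 1`:
`V` is invertible with inverse `Mᴴ` and is isometric for the normalised inner product on `L²(G)`.
The intertwining property is the substitution `h ↦ g h` together with `U^μ(g h) = U^μ(g) U^μ(h)`.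
-/

open Matrix Kronecker

noncomputable section

/-- A matrix representation is irreducible iff its commutant consists of scalars
(Schur's criterion, which over `ℂ` is equivalent to irreducibility). -/
def IsIrrep {G : Type} [Group G] {n : ℕ} (U : G →* Matrix.unitaryGroup (Fin n) ℂ) : Prop :=
  ∀ T : Matrix (Fin n) (Fin n) ℂ,
    (∀ g : G, T * (U g : Matrix (Fin n) (Fin n) ℂ) = (U g : Matrix (Fin n) (Fin n) ℂ) * T) →
    ∃ c : ℂ, T = c • (1 : Matrix (Fin n) (Fin n) ℂ)

/-- Equivalence of two matrix representations: an invertible intertwiner exists. -/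
def RepEquiv {G : Type} [Group G] {n m : ℕ} (U : G →* Matrix.unitaryGroup (Fin n) ℂ)
    (V : G →* Matrix.unitaryGroup (Fin m) ℂ) : Prop :=
  ∃ T : Matrix (Fin m) (Fin n) ℂ, Function.Bijective T.mulVec ∧
    ∀ g : G, T * (U g : Matrix (Fin n) (Fin n) ℂ) = (V g : Matrix (Fin m) (Fin m) ℂ) * T

/-- The block-diagonal representation `Ũ(g) = ⊕_μ U^μ(g) ⊗ I_{d_μ}`
on `⊕_μ ℂ^{d_μ} ⊗ ℂ^{d_μ}`. -/
def Utilde {G : Type} [Group G] {ι : Type} [Fintype ι] [DecidableEq ι] (d : ι → ℕ)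
    (U : ∀ μ, G →* Matrix.unitaryGroup (Fin (d μ)) ℂ) (g : G) :
    Matrix (Σ μ, Fin (d μ) × Fin (d μ)) (Σ μ, Fin (d μ) × Fin (d μ)) ℂ :=
  Matrix.blockDiagonal'
    (fun μ => (U μ g : Matrix (Fin (d μ)) (Fin (d μ)) ℂ) ⊗ₖ (1 : Matrix (Fin (d μ)) (Fin (d μ)) ℂ))

section UnitaryRep

variable {G : Type} [Group G] {n m : ℕ}

lemma conjTranspose_coe_map_inv (U : G →* unitaryGroup (Fin n) ℂ) (g : G) :
    (U g⁻¹).1ᴴ = (U g).1 := by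
  rw [map_inv, UnitaryGroup.inv_val, ← star_eq_conjTranspose, star_star]

lemma conjTranspose_intertwines {U : G →* unitaryGroup (Fin n) ℂ}
    {V : G →* unitaryGroup (Fin m) ℂ} {T : Matrix (Fin m) (Fin n) ℂ}
    (hT : ∀ g, T * (U g).1 = (V g).1 * T) (g : G) :
    Tᴴ * (V g).1 = (U g).1 * Tᴴ := by
  simpa only [conjTranspose_mul, conjTranspose_coe_map_inv] using
    (congrArg conjTranspose (hT g⁻¹)).symm

open scoped ComplexOrder in
lemma IsIrrep.eq_zero_of_intertwines {U : G →* unitaryGroup (Fin n) ℂ}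
    {V : G →* unitaryGroup (Fin m) ℂ} (hU : IsIrrep U) (hV : IsIrrep V)
    (hne : ¬ RepEquiv U V) {T : Matrix (Fin m) (Fin n) ℂ}
    (hT : ∀ g, T * (U g).1 = (V g).1 * T) : T = 0 := by
  by_contra hT0
  -- `Tᴴ T` and `T Tᴴ` are scalars by irreducibility, and nonzero as `T ≠ 0`:
  -- so `Tᴴ` inverts `T` up to scalars on both sides.
  have hT' := conjTranspose_intertwines hT
  obtain ⟨c, hc⟩ := hU (Tᴴ * T) fun g => by
    rw [Matrix.mul_assoc, hT g, ← Matrix.mul_assoc, hT' g, Matrix.mul_assoc]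
  obtain ⟨c', hc'⟩ := hV (T * Tᴴ) fun g => by
    rw [Matrix.mul_assoc, hT' g, ← Matrix.mul_assoc, hT g, Matrix.mul_assoc]
  have hc0 : c ≠ 0 := by
    rintro rfl
    exact hT0 (conjTranspose_mul_self_eq_zero.mp (by rw [hc, zero_smul]))
  have hc'0 : c' ≠ 0 := by
    rintro rfl
    exact hT0 (self_mul_conjTranspose_eq_zero.mp (by rw [hc', zero_smul]))
  refine hne ⟨T, ⟨?_, ?_⟩, hT⟩
  · refine Function.LeftInverse.injective (g := fun w => c⁻¹ • Tᴴ *ᵥ w) fun v => ?_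
    simp only [mulVec_mulVec, hc, smul_mulVec, one_mulVec, smul_smul,
      inv_mul_cancel₀ hc0, one_smul]
  · refine Function.RightInverse.surjective (f := T.mulVec) (g := fun w => c'⁻¹ • Tᴴ *ᵥ w)
      fun w => ?_
    simp only [mulVec_smul, mulVec_mulVec, hc', smul_mulVec, one_mulVec, smul_smul,
      inv_mul_cancel₀ hc'0, one_smul]

variable [Fintype G]

lemma sum_mul_mul_inv_intertwines (U : G →* unitaryGroup (Fin n) ℂ)
    (V : G →* unitaryGroup (Fin m) ℂ) (E : Matrix (Fin m) (Fin n) ℂ) (g : G) :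
    (∑ h, (V h).1 * E * (U h⁻¹).1) * (U g).1 = (V g).1 * ∑ h, (V h).1 * E * (U h⁻¹).1 := by
  rw [Matrix.sum_mul, Matrix.mul_sum]
  refine Fintype.sum_equiv (Equiv.mulLeft g⁻¹) _ _ fun h => ?_
  rw [Equiv.coe_mulLeft, Matrix.mul_assoc _ _ (U g).1, ← Matrix.mul_assoc (V g).1,
    ← Matrix.mul_assoc (V g).1]
  simp only [← UnitaryGroup.mul_val, ← map_mul, mul_inv_cancel_left, _root_.mul_inv_rev, inv_inv]

lemma sum_mul_single_mul_inv_apply (U : G →* unitaryGroup (Fin n) ℂ)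
    (V : G →* unitaryGroup (Fin m) ℂ) (i j : Fin m) (k l : Fin n) :
    (∑ h, (V h).1 * single j l (1 : ℂ) * (U h⁻¹).1) i k =
      ∑ h, (V h).1 i j * star ((U h).1 k l) := by
  simp [Matrix.sum_apply, mul_apply, single_apply, ite_and, Finset.sum_ite_eq, Matrix.star_apply]

lemma IsIrrep.sum_mul_star_eq_zero {U : G →* unitaryGroup (Fin n) ℂ}
    {V : G →* unitaryGroup (Fin m) ℂ} (hU : IsIrrep U) (hV : IsIrrep V)
    (hne : ¬ RepEquiv U V) (i j : Fin m) (k l : Fin n) :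
    ∑ h, (V h).1 i j * star ((U h).1 k l) = 0 := by
  rw [← sum_mul_single_mul_inv_apply,
    IsIrrep.eq_zero_of_intertwines hU hV hne (sum_mul_mul_inv_intertwines U V _),
    Matrix.zero_apply]

lemma IsIrrep.sum_mul_star_self {U : G →* unitaryGroup (Fin n) ℂ} (hU : IsIrrep U)
    (i j k l : Fin n) :
    ∑ h, (U h).1 i j * star ((U h).1 k l) =
      if i = k ∧ j = l then (Fintype.card G : ℂ) / n else 0 := by
  have hn : (n : ℂ) ≠ 0 := Nat.cast_ne_zero.mpr i.pos.ne'
  obtain ⟨c, hc⟩ := hU _ (sum_mul_mul_inv_intertwines U U (single j l (1 : ℂ)))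
  have hterm (h : G) :
      trace ((U h).1 * single j l (1 : ℂ) * (U h⁻¹).1) = if l = j then 1 else 0 := by
    rw [trace_mul_cycle, ← UnitaryGroup.mul_val, ← map_mul, inv_mul_cancel, map_one,
      UnitaryGroup.one_val, Matrix.one_mul, ← Matrix.mul_one (single j l (1 : ℂ)),
      trace_single_mul, one_apply, one_smul]
  obtain rfl : c = Fintype.card G * (if l = j then 1 else 0) / n := by
    have htrace := congrArg trace hc
    rw [trace_sum, Finset.sum_congr rfl fun h _ => hterm h, Finset.sum_const, Finset.card_univ,
      nsmul_eq_mul, trace_smul, trace_one, Fintype.card_fin, smul_eq_mul] at htrace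
    rw [eq_div_iff hn, htrace]
  rw [← sum_mul_single_mul_inv_apply, hc, Matrix.smul_apply, one_apply, smul_eq_mul]
  by_cases hik : i = k <;> by_cases hjl : j = l <;> simp [hik, hjl, eq_comm]

end UnitaryRep

namespace Matrix

variable {m n R : Type} [Fintype m] [Fintype n] [DecidableEq n] [Field R]

theorem mul_eq_smul_one_comm_of_card_eq [DecidableEq m] {A : Matrix m n R} {B : Matrix n m R}
    {c : R} (hc : c ≠ 0) (hcard : Fintype.card m = Fintype.card n) (h : A * B = c • 1) :
    B * A = c • 1 := by
  have hinv : (c⁻¹ • B) * A = 1 := by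
    rw [← mul_eq_one_comm_of_card_eq _ _ _ hcard, Matrix.mul_smul, h, smul_smul,
      inv_mul_cancel₀ hc, one_smul]
  rw [← hinv, Matrix.smul_mul, smul_smul, mul_inv_cancel₀ hc, one_smul]

theorem bijective_smul_mulVec [DecidableEq m] {A : Matrix m n R} {B : Matrix n m R} {c : R}
    (hc : c ≠ 0) (hAB : A * B = c • 1) (hBA : B * A = c • 1) :
    Function.Bijective fun v => c⁻¹ • A *ᵥ v := by
  refine Function.bijective_iff_has_inverse.mpr ⟨B.mulVec, fun v => ?_, fun w => ?_⟩ <;>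
    simp only [mulVec_smul, mulVec_mulVec, hAB, hBA, smul_mulVec, one_mulVec, smul_smul,
      inv_mul_cancel₀ hc, one_smul]

theorem star_smul_mulVec_dotProduct_smul_mulVec [StarRing R] {A : Matrix m n R} {c : R}
    (hc : IsSelfAdjoint c) (h : Aᴴ * A = c • 1) (v w : n → R) :
    star (c⁻¹ • A *ᵥ v) ⬝ᵥ (c⁻¹ • A *ᵥ w) = c⁻¹ * (star v ⬝ᵥ w) := by
  rw [star_smul, star_inv₀, hc.star_eq, star_mulVec, smul_dotProduct, dotProduct_smul,
    ← dotProduct_mulVec, mulVec_mulVec, h, smul_mulVec, one_mulVec, dotProduct_smul, smul_smul,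
    smul_smul, smul_eq_mul]
  field_simp

end Matrix

section FourierMatrix

variable {G : Type} [Group G] {ι : Type} (d : ι → ℕ) (U : ∀ μ, G →* unitaryGroup (Fin (d μ)) ℂ)

def fourierMatrix : Matrix (Σ μ, Fin (d μ) × Fin (d μ)) G ℂ :=
  of fun x h => (Real.sqrt (d x.1) : ℂ) * (U x.1 h).1 x.2.1 x.2.2

lemma card_sigma_fin_prod_fin [Fintype ι] :
    Fintype.card (Σ μ, Fin (d μ) × Fin (d μ)) = ∑ μ, d μ ^ 2 := by
  simp [Fintype.card_sigma, sq]

lemma fourierMatrix_mul_conjTranspose_apply [Fintype G] (μ ν : ι) (i j : Fin (d μ))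
    (k l : Fin (d ν)) :
    (fourierMatrix d U * (fourierMatrix d U)ᴴ) ⟨μ, (i, j)⟩ ⟨ν, (k, l)⟩ =
      Real.sqrt (d μ) * Real.sqrt (d ν) * ∑ h, (U μ h).1 i j * star ((U ν h).1 k l) := by
  simp only [mul_apply, conjTranspose_apply, fourierMatrix, of_apply, star_mul', Finset.mul_sum,
    Complex.star_def, Complex.conj_ofReal]
  exact Finset.sum_congr rfl fun h _ => by ring

variable {d U} [DecidableEq ι]

lemma Utilde_mulVec_apply [Fintype ι] (g : G) (w : (Σ μ, Fin (d μ) × Fin (d μ)) → ℂ) (μ : ι)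
    (i j : Fin (d μ)) :
    (Utilde d U g *ᵥ w) ⟨μ, (i, j)⟩ = ∑ k, (U μ g).1 i k * w ⟨μ, (k, j)⟩ := by
  simp [Utilde, mulVec, dotProduct, Fintype.sum_sigma, blockDiagonal'_apply, one_apply,
    Fintype.sum_prod_type]

lemma fourierMatrix_mulVec_translate [Fintype G] [Fintype ι] (g : G) (f : G → ℂ) :
    fourierMatrix d U *ᵥ (fun h => f (g⁻¹ * h)) = Utilde d U g *ᵥ (fourierMatrix d U *ᵥ f) := by
  ext ⟨μ, i, j⟩
  rw [Utilde_mulVec_apply]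
  simp only [mulVec, dotProduct, fourierMatrix, of_apply, Finset.mul_sum]
  rw [← Equiv.sum_comp (Equiv.mulLeft g), Finset.sum_comm]
  refine Finset.sum_congr rfl fun h _ => ?_
  simp only [Equiv.coe_mulLeft, inv_mul_cancel_left, map_mul, UnitaryGroup.mul_val, mul_apply,
    Finset.mul_sum, Finset.sum_mul]
  exact Finset.sum_congr rfl fun k _ => by ring

variable [Fintype G]

lemma fourierMatrix_mul_conjTranspose (hirr : ∀ μ, IsIrrep (U μ))
    (hineq : Pairwise fun μ ν => ¬ RepEquiv (U μ) (U ν)) :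
    fourierMatrix d U * (fourierMatrix d U)ᴴ = (Fintype.card G : ℂ) • 1 := by
  ext ⟨μ, i, j⟩ ⟨ν, k, l⟩
  rw [fourierMatrix_mul_conjTranspose_apply, Matrix.smul_apply, one_apply, smul_eq_mul]
  rcases eq_or_ne μ ν with rfl | hμν
  · have hd : (d μ : ℂ) ≠ 0 := Nat.cast_ne_zero.mpr i.pos.ne'
    rw [IsIrrep.sum_mul_star_self (hirr μ), ← Complex.ofReal_mul,
      Real.mul_self_sqrt (Nat.cast_nonneg _), Complex.ofReal_natCast]
    by_cases hik : i = k <;> by_cases hjl : j = l <;> simp [hik, hjl, mul_div_cancel₀, hd]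
  · rw [IsIrrep.sum_mul_star_eq_zero (hirr ν) (hirr μ) (hineq hμν.symm),
      if_neg fun h => hμν (congrArg Sigma.fst h)]
    simp

lemma conjTranspose_mul_fourierMatrix [DecidableEq G] [Fintype ι] (hirr : ∀ μ, IsIrrep (U μ))
    (hineq : Pairwise fun μ ν => ¬ RepEquiv (U μ) (U ν))
    (hcomplete : ∑ μ, d μ ^ 2 = Fintype.card G) :
    (fourierMatrix d U)ᴴ * fourierMatrix d U = (Fintype.card G : ℂ) • 1 :=
  mul_eq_smul_one_comm_of_card_eq (Nat.cast_ne_zero.mpr Fintype.card_ne_zero)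
    ((card_sigma_fin_prod_fin d).trans hcomplete) (fourierMatrix_mul_conjTranspose hirr hineq)

end FourierMatrix

/-- Fourier–Plancherel unitarity for a finite group: given a complete family of pairwise
inequivalent irreducible unitary representations (completeness: `Σ_μ d_μ² = |G|`), the map
`(V f)_μ = (√d_μ/|G|) Σ_h f(h) |U^μ(h)⟩⟩` is a unitary isomorphism from `L²(G)` (with inner
product `⟨f₁,f₂⟩ = |G|⁻¹ Σ_h conj(f₁ h) f₂ h`) onto `⊕_μ ℂ^{d_μ}⊗ℂ^{d_μ}`, intertwining the
left-regular representation with `⊕_μ U^μ(g) ⊗ I_{d_μ}`. -/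
theorem stmt4 {G : Type} [Group G] [Fintype G] [DecidableEq G]
    {ι : Type} [Fintype ι] [DecidableEq ι] (d : ι → ℕ)
    (U : ∀ μ, G →* Matrix.unitaryGroup (Fin (d μ)) ℂ)
    (hirr : ∀ μ, IsIrrep (U μ))
    (hineq : Pairwise fun μ ν => ¬ RepEquiv (U μ) (U ν))
    (hcomplete : ∑ μ, (d μ) ^ 2 = Fintype.card G)
    (V : (G → ℂ) → ((Σ μ, Fin (d μ) × Fin (d μ)) → ℂ))
    (hV : ∀ (f : G → ℂ) (μ : ι) (i j : Fin (d μ)),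
      V f ⟨μ, (i, j)⟩ = ((Real.sqrt (d μ) / (Fintype.card G : ℝ) : ℝ) : ℂ) *
        ∑ h : G, f h * (U μ h : Matrix (Fin (d μ)) (Fin (d μ)) ℂ) i j) :
    Function.Bijective V ∧
    (∀ f₁ f₂ : G → ℂ,
      (∑ x, star (V f₁ x) * V f₂ x)
        = (Fintype.card G : ℂ)⁻¹ * ∑ h : G, star (f₁ h) * f₂ h) ∧
    (∀ (g : G) (f : G → ℂ),
      V (fun h => f (g⁻¹ * h)) = (Utilde d U g).mulVec (V f)) := by
  obtain rfl : V = fun f => (Fintype.card G : ℂ)⁻¹ • fourierMatrix d U *ᵥ f := by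
    funext f
    ext ⟨μ, i, j⟩
    rw [hV, Pi.smul_apply, smul_eq_mul, Complex.ofReal_div, Complex.ofReal_natCast,
      div_eq_inv_mul, mul_assoc]
    simp only [mulVec, dotProduct, fourierMatrix, of_apply, Finset.mul_sum]
    exact Finset.sum_congr rfl fun h _ => by ring
  have hMMH := fourierMatrix_mul_conjTranspose hirr hineq
  have hMHM := conjTranspose_mul_fourierMatrix hirr hineq hcomplete
  refine ⟨bijective_smul_mulVec (Nat.cast_ne_zero.mpr Fintype.card_ne_zero) hMMH hMHM,
    star_smul_mulVec_dotProduct_smul_mulVec (.natCast _) hMHM, fun g f => ?_⟩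
  dsimp only
  rw [fourierMatrix_mulVec_translate, mulVec_smul]

end
end

section
/- Let G be a finite group, U : G → U(d) a unitary representation, c : G×G → ℝ a left-invariant cost function (c(hĝ,hg) = c(ĝ,g) for all h,ĝ,g), ρ a state on ℂ^d, and Q a POVM on G. Define P_ĝ := (1/|G|) Σ_{h∈G} U(h)† Q_{hĝ} U(h). Then: (i) P is a POVM covariant with respect to U (P_{gĝ} = U(g)P_ĝU(g)†); (ii) the pointwise cost c(ρ,P|g) is the same for every g ∈ G; (iii) c_ave(ρ,P) = c_ave(ρ,Q); (iv) c_wc(ρ,P) ≤ c_wc(ρ,Q). In particular c_ave(ρ,P) = c_wc(ρ,P) = c(ρ,P|g) for all g. -/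
/-! Conjugating the twirl by `U g` amounts to reindexing the sum over `h` by `h ↦ h g`, which
gives covariance. Cyclicity of the trace and left invariance of `c` turn the pointwise cost of
the twirl at `g` into `|G|⁻¹ Σ_h c(ρ,Q|hg)`, the average cost of `Q` whatever `g` is; and an
average never exceeds a maximum. -/

open Matrix Kronecker ComplexOrder

noncomputable section

/-- Pointwise cost `c(ρ,P|g) = Σ_ĝ c(ĝ,g)·Tr[P_ĝ W(g) ρ W(g)†]` of an estimation strategy. -/
def pCost {G : Type} [Group G] [Fintype G] {n : Type} [Fintype n]
    (W : G → Matrix n n ℂ) (c : G → G → ℝ) (ρ : Matrix n n ℂ)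
    (P : G → Matrix n n ℂ) (g : G) : ℝ :=
  ∑ ghat : G, c ghat g * (Matrix.trace (P ghat * (W g * ρ * (W g)ᴴ))).re

/-- Average cost `c_ave(ρ,P) = |G|⁻¹ Σ_g c(ρ,P|g)`. -/
def aCost {G : Type} [Group G] [Fintype G] {n : Type} [Fintype n]
    (W : G → Matrix n n ℂ) (c : G → G → ℝ) (ρ : Matrix n n ℂ)
    (P : G → Matrix n n ℂ) : ℝ :=
  (Fintype.card G : ℝ)⁻¹ * ∑ g : G, pCost W c ρ P g

/-- Worst-case cost `c_wc(ρ,P) = max_g c(ρ,P|g)`. -/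
def wCost {G : Type} [Group G] [Fintype G] {n : Type} [Fintype n]
    (W : G → Matrix n n ℂ) (c : G → G → ℝ) (ρ : Matrix n n ℂ)
    (P : G → Matrix n n ℂ) : ℝ :=
  Finset.univ.sup' ⟨(1 : G), Finset.mem_univ _⟩ (pCost W c ρ P)

section Twirl

variable {G : Type} [Group G] {n : Type} [Fintype n] [DecidableEq n]
  (U : G →* unitaryGroup n ℂ)

lemma coe_map_mul (a b : G) : (U (a * b) : Matrix n n ℂ) = U a * U b := by
  rw [map_mul, UnitaryGroup.mul_apply]

lemma conjTranspose_mul_coe_self (g : G) : (U g : Matrix n n ℂ)ᴴ * U g = 1 :=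
  UnitaryGroup.star_mul_self (U g)

lemma coe_mul_conjTranspose_self (g : G) : (U g : Matrix n n ℂ) * (U g)ᴴ = 1 :=
  Unitary.coe_mul_star_self (U g)

variable [Fintype G]

def twirl (Q : G → Matrix n n ℂ) (ghat : G) : Matrix n n ℂ :=
  (Fintype.card G : ℂ)⁻¹ • ∑ h : G, (U h : Matrix n n ℂ)ᴴ * Q (h * ghat) * U h

lemma twirl_posSemidef {Q : G → Matrix n n ℂ} (hQ : ∀ g, (Q g).PosSemidef) (ghat : G) :
    (twirl U Q ghat).PosSemidef :=
  (posSemidef_sum _ fun _ _ => (hQ _).conjTranspose_mul_mul_same _).smul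
    (inv_nonneg.mpr (Nat.cast_nonneg _))

lemma sum_twirl {Q : G → Matrix n n ℂ} (hQ : ∑ g, Q g = 1) : ∑ ghat, twirl U Q ghat = 1 := by
  have hrow (h : G) : ∑ ghat, (U h : Matrix n n ℂ)ᴴ * Q (h * ghat) * U h = 1 := by
    rw [← Finset.sum_mul, ← Finset.mul_sum,
      Fintype.sum_equiv (Equiv.mulLeft h) (fun i => Q (h * i)) Q fun _ => rfl, hQ, mul_one,
      conjTranspose_mul_coe_self]
  have hcard : (Fintype.card G : ℂ) ≠ 0 := Nat.cast_ne_zero.mpr Fintype.card_ne_zero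
  simp only [twirl, ← Finset.smul_sum]
  rw [Finset.sum_comm, Finset.sum_congr rfl fun h _ => hrow h, Finset.sum_const,
    Finset.card_univ, ← Nat.cast_smul_eq_nsmul ℂ, smul_smul, inv_mul_cancel₀ hcard, one_smul]

lemma twirl_mul_left (Q : G → Matrix n n ℂ) (g ghat : G) :
    twirl U Q (g * ghat) = (U g : Matrix n n ℂ) * twirl U Q ghat * (U g : Matrix n n ℂ)ᴴ := by
  simp only [twirl, mul_smul_comm, smul_mul_assoc, Finset.mul_sum, Finset.sum_mul]
  congr 1
  refine Fintype.sum_equiv (Equiv.mulRight g) _ _ fun h => ?_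
  rw [Equiv.coe_mulRight, coe_map_mul, conjTranspose_mul, mul_assoc h g ghat]
  simp only [Matrix.mul_assoc, coe_mul_conjTranspose_self, Matrix.mul_one]
  rw [← Matrix.mul_assoc (U g : Matrix n n ℂ), coe_mul_conjTranspose_self, Matrix.one_mul]

lemma trace_twirl_mul_conj (Q : G → Matrix n n ℂ) (ρ : Matrix n n ℂ) (ghat g : G) :
    (twirl U Q ghat * ((U g : Matrix n n ℂ) * ρ * (U g : Matrix n n ℂ)ᴴ)).trace
      = (Fintype.card G : ℂ)⁻¹ * ∑ h : G,
        (Q (h * ghat) * ((U (h * g) : Matrix n n ℂ) * ρ * (U (h * g) : Matrix n n ℂ)ᴴ)).trace := by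
  rw [twirl, smul_mul_assoc, trace_smul, Finset.sum_mul, trace_sum, smul_eq_mul]
  congr 1
  refine Finset.sum_congr rfl fun h _ => ?_
  rw [coe_map_mul, conjTranspose_mul]
  simp only [Matrix.mul_assoc]
  rw [trace_mul_comm]
  simp only [Matrix.mul_assoc]

lemma pCost_twirl_eq_average {c : G → G → ℝ}
    (hc : ∀ h ghat g : G, c (h * ghat) (h * g) = c ghat g)
    (ρ : Matrix n n ℂ) (Q : G → Matrix n n ℂ) (g : G) :
    pCost (fun g => (U g : Matrix n n ℂ)) c ρ (twirl U Q) g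
      = (Fintype.card G : ℝ)⁻¹ *
        ∑ h : G, pCost (fun g => (U g : Matrix n n ℂ)) c ρ Q (h * g) := by
  have hcard : ((Fintype.card G : ℂ))⁻¹ = ((Fintype.card G : ℝ)⁻¹ : ℝ) := by push_cast; rfl
  simp only [pCost, trace_twirl_mul_conj, hcard, Complex.re_ofReal_mul, Complex.re_sum,
    Finset.mul_sum]
  rw [Finset.sum_comm]
  refine Finset.sum_congr rfl fun h _ => ?_
  refine Fintype.sum_equiv (Equiv.mulLeft h) _ _ fun ghat => ?_
  rw [Equiv.coe_mulLeft, hc]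
  ring

lemma pCost_twirl {c : G → G → ℝ} (hc : ∀ h ghat g : G, c (h * ghat) (h * g) = c ghat g)
    (ρ : Matrix n n ℂ) (Q : G → Matrix n n ℂ) (g : G) :
    pCost (fun g => (U g : Matrix n n ℂ)) c ρ (twirl U Q) g
      = aCost (fun g => (U g : Matrix n n ℂ)) c ρ Q := by
  rw [pCost_twirl_eq_average U hc, aCost]
  congr 1
  exact Fintype.sum_equiv (Equiv.mulRight g) _ _ fun _ => rfl

end Twirl

section Cost

variable {G : Type} [Group G] [Fintype G] {n : Type} [Fintype n]
  {W : G → Matrix n n ℂ} {c : G → G → ℝ} {ρ : Matrix n n ℂ} {P : G → Matrix n n ℂ}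

lemma aCost_le_wCost : aCost W c ρ P ≤ wCost W c ρ P := by
  have hcard : (0 : ℝ) < Fintype.card G := Nat.cast_pos.mpr Fintype.card_pos
  rw [aCost, inv_mul_le_iff₀ hcard]
  simpa using Finset.sum_le_card_nsmul Finset.univ (pCost W c ρ P) (wCost W c ρ P)
    fun g _ => Finset.le_sup' _ (Finset.mem_univ g)

lemma aCost_eq_of_forall_pCost_eq {r : ℝ} (h : ∀ g, pCost W c ρ P g = r) :
    aCost W c ρ P = r := by
  have hcard : (Fintype.card G : ℝ) ≠ 0 := Nat.cast_ne_zero.mpr Fintype.card_ne_zero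
  simp only [aCost, h, Finset.sum_const, Finset.card_univ, nsmul_eq_mul]
  field_simp

lemma wCost_eq_of_forall_pCost_eq {r : ℝ} (h : ∀ g, pCost W c ρ P g = r) :
    wCost W c ρ P = r :=
  le_antisymm (Finset.sup'_le _ _ fun g _ => (h g).le)
    ((h 1).symm.le.trans (Finset.le_sup' _ (Finset.mem_univ 1)))

end Cost

theorem stmt8_general {G : Type} [Group G] [Fintype G] {d : ℕ}
    (U : G →* Matrix.unitaryGroup (Fin d) ℂ)
    (c : G → G → ℝ) (hc : ∀ h ghat g : G, c (h * ghat) (h * g) = c ghat g)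
    (ρ : Matrix (Fin d) (Fin d) ℂ)
    (Q : G → Matrix (Fin d) (Fin d) ℂ)
    (hQpos : ∀ ghat, (Q ghat).PosSemidef) (hQsum : ∑ ghat, Q ghat = 1)
    (P : G → Matrix (Fin d) (Fin d) ℂ)
    (hP : ∀ ghat : G, P ghat = (Fintype.card G : ℂ)⁻¹ •
      ∑ h : G, (U h : Matrix (Fin d) (Fin d) ℂ)ᴴ * Q (h * ghat)
        * (U h : Matrix (Fin d) (Fin d) ℂ)) :
    (∀ ghat, (P ghat).PosSemidef) ∧ (∑ ghat, P ghat = 1) ∧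
    (∀ g ghat : G, P (g * ghat)
        = (U g : Matrix (Fin d) (Fin d) ℂ) * P ghat * (U g : Matrix (Fin d) (Fin d) ℂ)ᴴ) ∧
    (∀ g g' : G,
      pCost (fun g => (U g : Matrix (Fin d) (Fin d) ℂ)) c ρ P g
        = pCost (fun g => (U g : Matrix (Fin d) (Fin d) ℂ)) c ρ P g') ∧
    (aCost (fun g => (U g : Matrix (Fin d) (Fin d) ℂ)) c ρ P
        = aCost (fun g => (U g : Matrix (Fin d) (Fin d) ℂ)) c ρ Q) ∧
    (wCost (fun g => (U g : Matrix (Fin d) (Fin d) ℂ)) c ρ P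
        ≤ wCost (fun g => (U g : Matrix (Fin d) (Fin d) ℂ)) c ρ Q) ∧
    (∀ g : G,
      aCost (fun g => (U g : Matrix (Fin d) (Fin d) ℂ)) c ρ P
          = pCost (fun g => (U g : Matrix (Fin d) (Fin d) ℂ)) c ρ P g ∧
      wCost (fun g => (U g : Matrix (Fin d) (Fin d) ℂ)) c ρ P
          = pCost (fun g => (U g : Matrix (Fin d) (Fin d) ℂ)) c ρ P g) := by
  obtain rfl : P = twirl U Q := funext hP
  have hconst := pCost_twirl U hc ρ Q
  have haP := aCost_eq_of_forall_pCost_eq hconst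
  have hwP := wCost_eq_of_forall_pCost_eq hconst
  exact ⟨twirl_posSemidef U hQpos, sum_twirl U hQsum, twirl_mul_left U Q,
    fun g g' => (hconst g).trans (hconst g').symm, haP, hwP.trans_le aCost_le_wCost,
    fun g => ⟨haP.trans (hconst g).symm, hwP.trans (hconst g).symm⟩⟩

/-- Group-averaging a POVM for a left-invariant cost function: the averaged POVM
`P_ĝ := |G|⁻¹ Σ_h U(h)† Q_{hĝ} U(h)` is covariant, has constant pointwise cost, the same
average cost as `Q`, and worst-case cost no larger than that of `Q`; in particular
`c_ave(ρ,P) = c_wc(ρ,P) = c(ρ,P|g)` for every `g`. -/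
theorem stmt8 {G : Type} [Group G] [Fintype G] [DecidableEq G] {d : ℕ}
    (U : G →* Matrix.unitaryGroup (Fin d) ℂ)
    (c : G → G → ℝ) (hc : ∀ h ghat g : G, c (h * ghat) (h * g) = c ghat g)
    (ρ : Matrix (Fin d) (Fin d) ℂ) (hρ : ρ.PosSemidef) (hρtr : ρ.trace = 1)
    (Q : G → Matrix (Fin d) (Fin d) ℂ)
    (hQpos : ∀ ghat, (Q ghat).PosSemidef) (hQsum : ∑ ghat, Q ghat = 1)
    (P : G → Matrix (Fin d) (Fin d) ℂ)
    (hP : ∀ ghat : G, P ghat = (Fintype.card G : ℂ)⁻¹ •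
      ∑ h : G, (U h : Matrix (Fin d) (Fin d) ℂ)ᴴ * Q (h * ghat)
        * (U h : Matrix (Fin d) (Fin d) ℂ)) :
    (∀ ghat, (P ghat).PosSemidef) ∧ (∑ ghat, P ghat = 1) ∧
    (∀ g ghat : G, P (g * ghat)
        = (U g : Matrix (Fin d) (Fin d) ℂ) * P ghat * (U g : Matrix (Fin d) (Fin d) ℂ)ᴴ) ∧
    (∀ g g' : G,
      pCost (fun g => (U g : Matrix (Fin d) (Fin d) ℂ)) c ρ P g
        = pCost (fun g => (U g : Matrix (Fin d) (Fin d) ℂ)) c ρ P g') ∧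
    (aCost (fun g => (U g : Matrix (Fin d) (Fin d) ℂ)) c ρ P
        = aCost (fun g => (U g : Matrix (Fin d) (Fin d) ℂ)) c ρ Q) ∧
    (wCost (fun g => (U g : Matrix (Fin d) (Fin d) ℂ)) c ρ P
        ≤ wCost (fun g => (U g : Matrix (Fin d) (Fin d) ℂ)) c ρ Q) ∧
    (∀ g : G,
      aCost (fun g => (U g : Matrix (Fin d) (Fin d) ℂ)) c ρ P
          = pCost (fun g => (U g : Matrix (Fin d) (Fin d) ℂ)) c ρ P g ∧
      wCost (fun g => (U g : Matrix (Fin d) (Fin d) ℂ)) c ρ P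
          = pCost (fun g => (U g : Matrix (Fin d) (Fin d) ℂ)) c ρ P g) :=
  stmt8_general U c hc ρ Q hQpos hQsum P hP

end
end

section
/- Let X be a finite set and, for each x ∈ X, let ρ_x be a positive semidefinite d×d complex matrix such that ρ := Σ_x ρ_x has trace 1 (an ensemble). Let |Ψ⟩ ∈ ℂ^d ⊗ ℂ^k be a purification of ρ, i.e., Tr_K[|Ψ⟩⟨Ψ|] = ρ. Then there exists a POVM {P_x}_{x∈X} on ℂ^k (each P_x positive semidefinite, Σ_x P_x = I_k) such that ρ_x = Tr_K[(I_d ⊗ P_x)|Ψ⟩⟨Ψ|] for every x ∈ X. -/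
/-!
Read `Ψ` as the `d × k` matrix `A`, so that `Tr_K[(I ⊗ R)|Ψ⟩⟨Ψ|] = A Rᵀ Aᴴ` and `ρ = A Aᴴ`.
Let `ρ⁺ = cfc (·⁻¹) ρ`; because `0⁻¹ = 0` in `ℝ`, this is the Moore–Penrose inverse, and
`ρ ρ⁺ ρ = ρ`, `ρ⁺ ρ ρ⁺ = ρ⁺`. Then `E = Aᴴ ρ⁺ A` is an orthogonal projection, and
`Q_x = Aᴴ ρ⁺ ρ_x ρ⁺ A`, with `1 - E` added at one outcome, is a POVM: `∑ Q_x = E + (1 - E)`.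
Since `0 ≤ ρ_x ≤ ρ`, the kernel of `ρ` lies in that of `ρ_x`, so `ρ ρ⁺ ρ_x ρ⁺ ρ = ρ_x`, while
`A (1 - E) Aᴴ = ρ - ρ ρ⁺ ρ = 0`. The POVM on the purifying system is `P_x = Q_xᵀ`.
-/

open Matrix Kronecker ComplexOrder

noncomputable section

/-- Partial trace over the second tensor factor. -/
def ptrace {d k : ℕ} (M : Matrix (Fin d × Fin k) (Fin d × Fin k) ℂ) :
    Matrix (Fin d) (Fin d) ℂ :=
  Matrix.of fun i i' => ∑ j : Fin k, M (i, j) (i', j)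

open scoped MatrixOrder

namespace Matrix

variable {m 𝕜 : Type*} [Fintype m] [DecidableEq m] [RCLike 𝕜]

lemma continuousOn_spectrum (a : Matrix m m 𝕜) (f : ℝ → ℝ) : ContinuousOn f (spectrum ℝ a) :=
  a.finite_real_spectrum.continuousOn f

lemma cfc_mul_cfc (a : Matrix m m 𝕜) (f g : ℝ → ℝ) :
    cfc f a * cfc g a = cfc (fun x => f x * g x) a :=
  (cfc_mul f g a (a.continuousOn_spectrum f) (a.continuousOn_spectrum g)).symm

lemma mul_cfc_inv_mul_cancel {a : Matrix m m 𝕜} (ha : IsSelfAdjoint a) :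
    a * cfc (·⁻¹ : ℝ → ℝ) a * a = a := by
  have h := cfc_id' ℝ a
  calc a * cfc (·⁻¹ : ℝ → ℝ) a * a = cfc (fun x : ℝ => x * x⁻¹ * x) a := by
        rw [← cfc_mul_cfc, ← cfc_mul_cfc, h]
    _ = a := by simp only [mul_inv_mul_cancel, h]

lemma cfc_inv_mul_mul_cfc_inv_cancel {a : Matrix m m 𝕜} (ha : IsSelfAdjoint a) :
    cfc (·⁻¹ : ℝ → ℝ) a * a * cfc (·⁻¹ : ℝ → ℝ) a = cfc (·⁻¹ : ℝ → ℝ) a := by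
  calc cfc (·⁻¹ : ℝ → ℝ) a * a * cfc (·⁻¹ : ℝ → ℝ) a = cfc (fun x : ℝ => x⁻¹ * x * x⁻¹) a := by
        rw [← cfc_mul_cfc, ← cfc_mul_cfc, cfc_id' ℝ a]
    _ = cfc (·⁻¹ : ℝ → ℝ) a := by congr! 2 with x; simpa using mul_inv_mul_cancel x⁻¹

lemma mul_eq_zero_of_le_of_mul_eq_zero {a b c : Matrix m m 𝕜} (ha : 0 ≤ a) (hab : a ≤ b)
    (hbc : b * c = 0) : a * c = 0 := by
  have hconj : star c * a * c = 0 := by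
    refine le_antisymm ?_ (star_left_conjugate_nonneg ha c)
    calc star c * a * c ≤ star c * b * c := star_left_conjugate_le_conjugate hab c
      _ = 0 := by rw [mul_assoc, hbc, mul_zero]
  obtain ⟨s, rfl⟩ := CStarAlgebra.nonneg_iff_eq_star_mul_self.mp ha
  have hsc : s * c = 0 := by
    rw [← conjTranspose_mul_self_eq_zero, conjTranspose_mul, ← star_eq_conjTranspose,
      ← star_eq_conjTranspose]
    simpa only [mul_assoc] using hconj
  rw [mul_assoc, hsc, mul_zero]

lemma mul_cfc_inv_mul_right_of_le {a b : Matrix m m 𝕜} (ha : 0 ≤ a) (hab : a ≤ b) :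
    a * cfc (·⁻¹ : ℝ → ℝ) b * b = a := by
  have hb : IsSelfAdjoint b := (ha.trans hab).isSelfAdjoint
  have h := mul_eq_zero_of_le_of_mul_eq_zero ha hab (c := 1 - cfc (·⁻¹ : ℝ → ℝ) b * b)
    (by rw [mul_sub, mul_one, ← mul_assoc, mul_cfc_inv_mul_cancel hb, sub_self])
  rwa [mul_sub, mul_one, sub_eq_zero, eq_comm, ← mul_assoc] at h

lemma mul_cfc_inv_mul_left_of_le {a b : Matrix m m 𝕜} (ha : 0 ≤ a) (hab : a ≤ b) :
    b * cfc (·⁻¹ : ℝ → ℝ) b * a = a := by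
  have h := congrArg star (mul_cfc_inv_mul_right_of_le ha hab)
  rwa [star_mul, star_mul, (ha.trans hab).isSelfAdjoint.star_eq, IsSelfAdjoint.cfc.star_eq,
    ha.isSelfAdjoint.star_eq, ← mul_assoc] at h

variable {n : Type*} [Fintype n]

lemma isStarProjection_conjTranspose_mul_cfc_inv_mul (A : Matrix m n 𝕜) :
    IsStarProjection (Aᴴ * cfc (·⁻¹ : ℝ → ℝ) (A * Aᴴ) * A) := by
  have ha : IsSelfAdjoint (A * Aᴴ) := isHermitian_mul_conjTranspose_self A
  refine ⟨?_, ?_⟩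
  · calc Aᴴ * cfc (·⁻¹ : ℝ → ℝ) (A * Aᴴ) * A * (Aᴴ * cfc (·⁻¹ : ℝ → ℝ) (A * Aᴴ) * A)
        = Aᴴ * (cfc (·⁻¹ : ℝ → ℝ) (A * Aᴴ) * (A * Aᴴ) * cfc (·⁻¹ : ℝ → ℝ) (A * Aᴴ)) * A := by
          simp only [Matrix.mul_assoc]
      _ = _ := by rw [cfc_inv_mul_mul_cfc_inv_cancel ha]
  · rw [IsSelfAdjoint, star_eq_conjTranspose, conjTranspose_mul, conjTranspose_mul,
      conjTranspose_conjTranspose, ← star_eq_conjTranspose (cfc _ _), IsSelfAdjoint.cfc.star_eq,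
      Matrix.mul_assoc]

theorem exists_posSemidef_sum_eq_one_mul_mul_conjTranspose [DecidableEq n] {X : Type*}
    [Fintype X] [Nonempty X] (A : Matrix m n 𝕜) (ρ : X → Matrix m m 𝕜) (hρ : ∀ x, (ρ x).PosSemidef)
    (hsum : ∑ x, ρ x = A * Aᴴ) :
    ∃ Q : X → Matrix n n 𝕜, (∀ x, (Q x).PosSemidef) ∧ ∑ x, Q x = 1 ∧
      ∀ x, A * Q x * Aᴴ = ρ x := by
  classical
  obtain ⟨x₀⟩ := ‹Nonempty X›
  set a := A * Aᴴ
  set b := cfc (·⁻¹ : ℝ → ℝ) a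
  have hE := isStarProjection_conjTranspose_mul_cfc_inv_mul A
  set E := Aᴴ * b * A
  have hρa : ∀ x, ρ x ≤ a := fun x =>
    hsum ▸ Finset.single_le_sum (fun y _ => (hρ y).nonneg) (Finset.mem_univ x)
  refine ⟨fun x => (b * A)ᴴ * ρ x * (b * A) + if x = x₀ then 1 - E else 0, fun x => ?_, ?_, ?_⟩
  · refine ((hρ x).conjTranspose_mul_mul_same _).add ?_
    split_ifs
    · exact hE.one_sub_nonneg.posSemidef
    · exact .zero
  · have hsumQ : ∑ x, (b * A)ᴴ * ρ x * (b * A) = E := by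
      rw [← Matrix.sum_mul, ← Matrix.mul_sum, hsum, conjTranspose_mul,
        ← star_eq_conjTranspose b, IsSelfAdjoint.cfc.star_eq]
      calc Aᴴ * b * a * (b * A) = Aᴴ * (b * a * b) * A := by simp only [Matrix.mul_assoc]
        _ = E := by rw [cfc_inv_mul_mul_cfc_inv_cancel (isHermitian_mul_conjTranspose_self A)]
    rw [Finset.sum_add_distrib, hsumQ, Finset.sum_ite_eq', if_pos (Finset.mem_univ _),
      add_sub_cancel]
  · intro x
    have hmain : A * ((b * A)ᴴ * ρ x * (b * A)) * Aᴴ = ρ x := by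
      rw [conjTranspose_mul, ← star_eq_conjTranspose b, IsSelfAdjoint.cfc.star_eq]
      calc A * (Aᴴ * b * ρ x * (b * A)) * Aᴴ = a * b * ρ x * b * a := by
            simp only [a, Matrix.mul_assoc]
        _ = ρ x := by
          rw [mul_cfc_inv_mul_left_of_le (hρ x).nonneg (hρa x),
            mul_cfc_inv_mul_right_of_le (hρ x).nonneg (hρa x)]
    have hrest : A * (1 - E) * Aᴴ = 0 := by
      calc A * (1 - E) * Aᴴ = a - a * b * a := by
            simp only [E, a, Matrix.mul_sub, Matrix.sub_mul, Matrix.mul_one, Matrix.mul_assoc]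
        _ = 0 := by rw [mul_cfc_inv_mul_cancel (isHermitian_mul_conjTranspose_self A), sub_self]
    rw [Matrix.mul_add, Matrix.add_mul, hmain]
    split_ifs <;> simp [hrest]

end Matrix

lemma ptrace_one_kronecker_mul_vecMulVec {d k : ℕ} (Ψ : Fin d × Fin k → ℂ)
    (R : Matrix (Fin k) (Fin k) ℂ) :
    ptrace (((1 : Matrix (Fin d) (Fin d) ℂ) ⊗ₖ R) * vecMulVec Ψ (star Ψ)) =
      of (Function.curry Ψ) * Rᵀ * (of (Function.curry Ψ))ᴴ := by
  ext i i'
  simp only [ptrace, of_apply, mul_apply, kroneckerMap_apply, vecMulVec_apply, one_apply,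
    Fintype.sum_prod_type, ite_mul, one_mul, zero_mul, Finset.sum_ite_irrel,
    Finset.sum_const_zero, Finset.sum_ite_eq, Finset.mem_univ, if_true, transpose_apply,
    conjTranspose_apply, Function.curry_apply, Finset.sum_mul, Pi.star_apply]
  refine Finset.sum_congr rfl fun j _ => Finset.sum_congr rfl fun b _ => ?_
  ring

lemma ptrace_vecMulVec {d k : ℕ} (Ψ : Fin d × Fin k → ℂ) :
    ptrace (vecMulVec Ψ (star Ψ)) = of (Function.curry Ψ) * (of (Function.curry Ψ))ᴴ := by
  simpa [one_kronecker_one] using ptrace_one_kronecker_mul_vecMulVec Ψ 1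

/-- Schrödinger's steering lemma: every ensemble `{ρ_x}` for a state `ρ = Σ_x ρ_x` is induced
from any purification `|Ψ⟩` of `ρ` by a POVM on the purifying system:
`ρ_x = Tr_K[(I ⊗ P_x)|Ψ⟩⟨Ψ|]`. -/
theorem stmt9 {X : Type} [Fintype X] {d k : ℕ}
    (ρ : X → Matrix (Fin d) (Fin d) ℂ)
    (hρpos : ∀ x, (ρ x).PosSemidef)
    (hρtr : (∑ x, ρ x).trace = 1)
    (Ψ : Fin d × Fin k → ℂ)
    (hΨ : ptrace (Matrix.vecMulVec Ψ (star Ψ)) = ∑ x, ρ x) :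
    ∃ P : X → Matrix (Fin k) (Fin k) ℂ,
      (∀ x, (P x).PosSemidef) ∧ (∑ x, P x = 1) ∧
      ∀ x, ρ x = ptrace (((1 : Matrix (Fin d) (Fin d) ℂ) ⊗ₖ P x)
        * Matrix.vecMulVec Ψ (star Ψ)) := by
  have : Nonempty X := by
    by_contra! hX
    simp at hρtr
  obtain ⟨Q, hQ, hQsum, hQρ⟩ := exists_posSemidef_sum_eq_one_mul_mul_conjTranspose
    (of (Function.curry Ψ)) ρ hρpos (by rw [← hΨ, ptrace_vecMulVec])
  refine ⟨fun x => (Q x)ᵀ, fun x => (hQ x).transpose, ?_, fun x => ?_⟩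
  · rw [← transpose_sum, hQsum, transpose_one]
  · rw [ptrace_one_kronecker_mul_vecMulVec, transpose_transpose, hQρ]

end
end

section
/- Let ξ = Σ_{i=1}^r |η_i⟩⟨η_i| be a positive semidefinite operator on H̃, where each vector η_i has the form η_i = ⊕_μ √d_μ |η_{iμ}⟩⟩ for d_μ×d_μ matrices η_{iμ}. Suppose ξ is isotropic and satisfies the seed normalization (1/|G|) Σ_{ĝ∈G} Ũ(ĝ) ξ Ũ(ĝ)† = I. Then for every μ: Σ_{i=1}^r η_{iμ} η_{iμ}† = I_{d_μ} and Σ_{i=1}^r η_{iμ}ᵀ η_{iμ}* = I_{d_μ}. -/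
open Matrix Kronecker ComplexOrder

noncomputable section

/-- The modular conjugate representation `Ũ^R(g) = ⊕_μ I_{d_μ} ⊗ conj (U^μ(g))`. -/
def UtildeR {G : Type} [Group G] {ι : Type} [Fintype ι] [DecidableEq ι] (d : ι → ℕ)
    (U : ∀ μ, G →* Matrix.unitaryGroup (Fin (d μ)) ℂ) (g : G) :
    Matrix (Σ μ, Fin (d μ) × Fin (d μ)) (Σ μ, Fin (d μ) × Fin (d μ)) ℂ :=
  Matrix.blockDiagonal'
    (fun μ => (1 : Matrix (Fin (d μ)) (Fin (d μ)) ℂ) ⊗ₖ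
      ((U μ g : Matrix (Fin (d μ)) (Fin (d μ)) ℂ).map (starRingEnd ℂ)))

/-! The twirl `|G|⁻¹ Σ_g Ũ(g) ξ Ũ(g)†` acts on the `μ`-block of `ξ` through the local unitaries
`U^μ(g) ⊗ I`, which leave the partial trace over the first tensor factor unchanged. Hence the
partial trace over the first factor of the `μ`-block of `ξ`, namely `d_μ Σᵢ η_{iμ}ᵀ η_{iμ}*`,
equals that of the identity, `d_μ I`. Isotropy turns the seed normalization into the same
statement for the twirl by `Ũ^R(g)`, whose blocks `I ⊗ conj (U^μ(g))` are local on the second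
factor; tracing out the second factor gives `d_μ Σᵢ η_{iμ} η_{iμ}† = d_μ I`. -/

theorem inv_card_smul_sum_const {𝕜 G M : Type*} [DivisionSemiring 𝕜] [CharZero 𝕜] [Fintype G]
    [Nonempty G] [AddCommMonoid M] [Module 𝕜 M] (y : M) :
    (Fintype.card G : 𝕜)⁻¹ • ∑ _g : G, y = y := by
  rw [Finset.sum_const, Finset.card_univ, ← Nat.cast_smul_eq_nsmul 𝕜, smul_smul,
    inv_mul_cancel₀ (Nat.cast_ne_zero.2 Fintype.card_ne_zero), one_smul]

namespace Matrix

section PartialTrace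

variable {m n R : Type*}

def partialTraceFst [CommSemiring R] [Fintype m] :
    Matrix (m × n) (m × n) R →ₗ[R] Matrix n n R where
  toFun X := of fun b e => ∑ a, X (a, b) (a, e)
  map_add' X Y := by ext; simp [Finset.sum_add_distrib]
  map_smul' c X := by ext; simp [Finset.mul_sum]

def partialTraceSnd [CommSemiring R] [Fintype n] :
    Matrix (m × n) (m × n) R →ₗ[R] Matrix m m R where
  toFun X := of fun a c => ∑ b, X (a, b) (c, b)
  map_add' X Y := by ext; simp [Finset.sum_add_distrib]
  map_smul' c X := by ext; simp [Finset.mul_sum]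

@[simp]
theorem partialTraceFst_apply [CommSemiring R] [Fintype m] (X : Matrix (m × n) (m × n) R)
    (b e : n) : partialTraceFst X b e = ∑ a, X (a, b) (a, e) := rfl

@[simp]
theorem partialTraceSnd_apply [CommSemiring R] [Fintype n] (X : Matrix (m × n) (m × n) R)
    (a c : m) : partialTraceSnd X a c = ∑ b, X (a, b) (c, b) := rfl

section CommSemiring

variable [CommSemiring R]

theorem partialTraceFst_kronecker_one_mul [Fintype m] [Fintype n] [DecidableEq n]
    (P : Matrix m m R) (X : Matrix (m × n) (m × n) R) :
    partialTraceFst ((P ⊗ₖ 1) * X) = partialTraceFst (X * (P ⊗ₖ 1)) := by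
  ext b e
  simp only [partialTraceFst_apply, mul_apply, kroneckerMap_apply, one_apply, mul_ite, mul_one,
    mul_zero, ite_mul, zero_mul, Fintype.sum_prod_type, Finset.sum_ite_eq, Finset.mem_univ,
    if_true, Finset.sum_ite_eq']
  rw [Finset.sum_comm]
  simp only [mul_comm]

theorem partialTraceSnd_one_kronecker_mul [Fintype m] [Fintype n] [DecidableEq m]
    (P : Matrix n n R) (X : Matrix (m × n) (m × n) R) :
    partialTraceSnd ((1 ⊗ₖ P) * X) = partialTraceSnd (X * (1 ⊗ₖ P)) := by
  ext a c
  simp only [partialTraceSnd_apply, mul_apply, kroneckerMap_apply, one_apply, ite_mul, one_mul,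
    zero_mul, Fintype.sum_prod_type, Finset.sum_ite_irrel, Finset.sum_const_zero,
    Finset.sum_ite_eq, Finset.mem_univ, if_true, mul_ite, mul_zero, Finset.sum_ite_eq']
  rw [Finset.sum_comm]
  simp only [mul_comm]

theorem partialTraceFst_one [Fintype m] [DecidableEq m] [DecidableEq n] :
    partialTraceFst (1 : Matrix (m × n) (m × n) R) = (Fintype.card m : R) • 1 := by
  ext b e
  simp [one_apply]

theorem partialTraceSnd_one [Fintype n] [DecidableEq m] [DecidableEq n] :
    partialTraceSnd (1 : Matrix (m × n) (m × n) R) = (Fintype.card n : R) • 1 := by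
  ext a c
  simp [one_apply]

end CommSemiring

section StarRing

variable [CommSemiring R] [StarRing R]

theorem partialTraceFst_vecMulVec_star [Fintype m] (A B : Matrix m n R) :
    partialTraceFst (vecMulVec (fun p => A p.1 p.2) (star fun p => B p.1 p.2)) =
      Aᵀ * B.map (starRingEnd R) := by
  ext b e
  simp only [partialTraceFst_apply, vecMulVec_apply, Pi.star_apply, mul_apply, transpose_apply,
    map_apply]
  rfl

theorem partialTraceSnd_vecMulVec_star [Fintype n] (A B : Matrix m n R) :
    partialTraceSnd (vecMulVec (fun p => A p.1 p.2) (star fun p => B p.1 p.2)) = A * Bᴴ := by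
  ext a c
  simp [mul_apply, vecMulVec_apply]

theorem conjTranspose_map_starRingEnd_mul [Fintype n] [DecidableEq n] {W : Matrix n n R}
    (hW : Wᴴ * W = 1) : (W.map (starRingEnd R))ᴴ * W.map (starRingEnd R) = 1 := by
  rw [← conjTranspose_map (starRingEnd R) fun _ => rfl, ← Matrix.map_mul, hW,
    Matrix.map_one _ (map_zero _) (map_one _)]

variable [Fintype m] [Fintype n] [DecidableEq m] [DecidableEq n]

theorem partialTraceFst_kronecker_one_conj {W : Matrix m m R}
    (hW : Wᴴ * W = 1) (X : Matrix (m × n) (m × n) R) :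
    partialTraceFst ((W ⊗ₖ 1) * X * (W ⊗ₖ 1)ᴴ) = partialTraceFst X := by
  rw [Matrix.mul_assoc, partialTraceFst_kronecker_one_mul, Matrix.mul_assoc,
    conjTranspose_kronecker, conjTranspose_one, ← mul_kronecker_mul, hW, one_mul,
    one_kronecker_one, mul_one]

theorem partialTraceSnd_one_kronecker_conj {W : Matrix n n R}
    (hW : Wᴴ * W = 1) (X : Matrix (m × n) (m × n) R) :
    partialTraceSnd ((1 ⊗ₖ W) * X * (1 ⊗ₖ W)ᴴ) = partialTraceSnd X := by
  rw [Matrix.mul_assoc, partialTraceSnd_one_kronecker_mul, Matrix.mul_assoc,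
    conjTranspose_kronecker, conjTranspose_one, ← mul_kronecker_mul, hW, one_mul,
    one_kronecker_one, mul_one]

end StarRing

section Twirl

variable {𝕜 G : Type*} [Field 𝕜] [CharZero 𝕜] [StarRing 𝕜] [Fintype G] [Nonempty G]
  [Fintype m] [Fintype n] [DecidableEq m] [DecidableEq n]

theorem partialTraceFst_eq_of_twirl_kronecker_one_eq_one {W : G → Matrix m m 𝕜}
    (hW : ∀ g, (W g)ᴴ * W g = 1) {X : Matrix (m × n) (m × n) 𝕜}
    (hX : (Fintype.card G : 𝕜)⁻¹ • ∑ g, (W g ⊗ₖ 1) * X * (W g ⊗ₖ 1)ᴴ = 1) :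
    partialTraceFst X = (Fintype.card m : 𝕜) • 1 := by
  rw [← partialTraceFst_one, ← hX, map_smul, map_sum]
  simp only [partialTraceFst_kronecker_one_conj (hW _), inv_card_smul_sum_const]

theorem partialTraceSnd_eq_of_twirl_one_kronecker_eq_one {W : G → Matrix n n 𝕜}
    (hW : ∀ g, (W g)ᴴ * W g = 1) {X : Matrix (m × n) (m × n) 𝕜}
    (hX : (Fintype.card G : 𝕜)⁻¹ • ∑ g, (1 ⊗ₖ W g) * X * (1 ⊗ₖ W g)ᴴ = 1) :
    partialTraceSnd X = (Fintype.card n : 𝕜) • 1 := by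
  rw [← partialTraceSnd_one, ← hX, map_smul, map_sum]
  simp only [partialTraceSnd_one_kronecker_conj (hW _), inv_card_smul_sum_const]

end Twirl

end PartialTrace

theorem submatrix_sum {l m n o β α : Type*} [AddCommMonoid α] (s : Finset β)
    (M : β → Matrix m n α) (e : l → m) (f : o → n) :
    (∑ b ∈ s, M b).submatrix e f = ∑ b ∈ s, (M b).submatrix e f := by
  ext
  simp [sum_apply]

theorem mul_mul_conjTranspose_eq_of_mul_eq_one {n R : Type*} [Fintype n] [DecidableEq n]
    [Semiring R] [StarRing R] {P Q S X : Matrix n n R} (hPQ : P * Q = 1)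
    (hX : Q * S * X * (Q * S)ᴴ = X) : P * X * Pᴴ = S * X * Sᴴ := by
  have h : P * X * Pᴴ = P * Q * S * X * (P * Q * S)ᴴ := by
    conv_lhs => rw [← hX]
    simp only [conjTranspose_mul, Matrix.mul_assoc]
  rw [h, hPQ, one_mul]

section BlockDiagonal

variable {ι l l' R : Type*} [Fintype ι] [DecidableEq ι] {κ : ι → Type*}
  [∀ i, Fintype (κ i)] [NonUnitalNonAssocSemiring R]

theorem submatrix_sigmaMk_blockDiagonal'_mul (B : ∀ i, Matrix (κ i) (κ i) R)
    (X : Matrix (Σ i, κ i) l R) (i : ι) (f : l' → l) :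
    (blockDiagonal' B * X).submatrix (Sigma.mk i) f = B i * X.submatrix (Sigma.mk i) f := by
  ext p q
  simp only [submatrix_apply, mul_apply, Fintype.sum_sigma]
  rw [Finset.sum_eq_single i (fun j _ hj => by simp [blockDiagonal'_apply_ne _ _ _ hj.symm])
    (by simp)]
  simp [blockDiagonal'_apply_eq]

theorem submatrix_mul_blockDiagonal'_sigmaMk (B : ∀ i, Matrix (κ i) (κ i) R)
    (X : Matrix l (Σ i, κ i) R) (i : ι) (f : l' → l) :
    (X * blockDiagonal' B).submatrix f (Sigma.mk i) = X.submatrix f (Sigma.mk i) * B i := by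
  ext p q
  simp only [submatrix_apply, mul_apply, Fintype.sum_sigma]
  rw [Finset.sum_eq_single i (fun j _ hj => by simp [blockDiagonal'_apply_ne _ _ _ hj])
    (by simp)]
  simp [blockDiagonal'_apply_eq]

theorem submatrix_sigmaMk_blockDiagonal'_conj [∀ i, DecidableEq (κ i)] [StarRing R]
    (B : ∀ i, Matrix (κ i) (κ i) R) (X : Matrix (Σ i, κ i) (Σ i, κ i) R) (i : ι) :
    (blockDiagonal' B * X * (blockDiagonal' B)ᴴ).submatrix (Sigma.mk i) (Sigma.mk i) =
      B i * X.submatrix (Sigma.mk i) (Sigma.mk i) * (B i)ᴴ := by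
  rw [blockDiagonal'_conjTranspose, submatrix_mul_blockDiagonal'_sigmaMk,
    submatrix_sigmaMk_blockDiagonal'_mul]

theorem smul_sum_conj_submatrix_sigmaMk_eq_one {G : Type*} [∀ i, DecidableEq (κ i)]
    [StarRing R] [One R] {c : R} {B : G → ∀ i, Matrix (κ i) (κ i) R} {s : Finset G}
    {X : Matrix (Σ i, κ i) (Σ i, κ i) R}
    (h : c • ∑ g ∈ s, blockDiagonal' (B g) * X * (blockDiagonal' (B g))ᴴ = 1) (i : ι) :
    c • ∑ g ∈ s, B g i * X.submatrix (Sigma.mk i) (Sigma.mk i) * (B g i)ᴴ = 1 := by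
  simpa only [submatrix_smul, Pi.smul_apply, submatrix_sum,
    submatrix_sigmaMk_blockDiagonal'_conj, submatrix_one _ sigma_mk_injective] using
    congrArg (·.submatrix (Sigma.mk i) (Sigma.mk i)) h

end BlockDiagonal

end Matrix

theorem Utilde_mul_inv {G : Type} [Group G] {ι : Type} [Fintype ι] [DecidableEq ι] (d : ι → ℕ)
    (U : ∀ μ, G →* Matrix.unitaryGroup (Fin (d μ)) ℂ) (g : G) :
    Utilde d U g * Utilde d U g⁻¹ = 1 := by
  rw [Utilde, Utilde, ← blockDiagonal'_mul, ← blockDiagonal'_one]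
  congr 1
  funext μ
  rw [← mul_kronecker_mul, Matrix.one_mul, Pi.one_apply, ← one_kronecker_one]
  congr 1
  rw [← Matrix.UnitaryGroup.mul_val, ← map_mul, mul_inv_cancel, map_one]
  rfl

theorem submatrix_sigmaMk_sum_vecMulVec_sqrt {ι : Type*} (d : ι → ℕ) {r : ℕ}
    (A : Fin r → ∀ μ, Matrix (Fin (d μ)) (Fin (d μ)) ℂ) (μ : ι) :
    (∑ i, vecMulVec
      (fun q : Σ μ, Fin (d μ) × Fin (d μ) => (Real.sqrt (d q.1) : ℂ) * A i q.1 q.2.1 q.2.2)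
      (star fun q : Σ μ, Fin (d μ) × Fin (d μ) =>
        (Real.sqrt (d q.1) : ℂ) * A i q.1 q.2.1 q.2.2)).submatrix (Sigma.mk μ) (Sigma.mk μ) =
      (d μ : ℂ) • ∑ i, vecMulVec (fun p => A i μ p.1 p.2) (star fun p => A i μ p.1 p.2) := by
  have hsqrt : (Real.sqrt (d μ) : ℂ) * (Real.sqrt (d μ) : ℂ) = d μ := by
    rw [← Complex.ofReal_mul, Real.mul_self_sqrt (Nat.cast_nonneg _), Complex.ofReal_natCast]
  rw [submatrix_sum, Finset.smul_sum]
  refine Finset.sum_congr rfl fun i _ => ?_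
  ext p q
  simp only [submatrix_apply, vecMulVec_apply, Pi.star_apply, star_mul', Complex.star_def,
    Complex.conj_ofReal, Matrix.smul_apply, smul_eq_mul]
  linear_combination (A i μ p.1 p.2 * (starRingEnd ℂ) (A i μ q.1 q.2)) * hsqrt

theorem stmt14_general {G : Type} [Group G] [Fintype G]
    {ι : Type} [Fintype ι] [DecidableEq ι] (d : ι → ℕ) (hd : ∀ μ, 0 < d μ)
    (U : ∀ μ, G →* Matrix.unitaryGroup (Fin (d μ)) ℂ)
    {r : ℕ} (A : Fin r → ∀ μ, Matrix (Fin (d μ)) (Fin (d μ)) ℂ)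
    (ξ : Matrix (Σ μ, Fin (d μ) × Fin (d μ)) (Σ μ, Fin (d μ) × Fin (d μ)) ℂ)
    (hξ : ξ = ∑ i, Matrix.vecMulVec
      (fun q : Σ μ, Fin (d μ) × Fin (d μ) => (Real.sqrt (d q.1) : ℂ) * A i q.1 q.2.1 q.2.2)
      (star fun q : Σ μ, Fin (d μ) × Fin (d μ) =>
        (Real.sqrt (d q.1) : ℂ) * A i q.1 q.2.1 q.2.2))
    (hiso : ∀ g : G, (Utilde d U g * UtildeR d U g) * ξ * (Utilde d U g * UtildeR d U g)ᴴ = ξ)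
    (hnorm : (Fintype.card G : ℂ)⁻¹ •
      ∑ ghat : G, Utilde d U ghat * ξ * (Utilde d U ghat)ᴴ = 1) :
    ∀ μ, (∑ i, A i μ * (A i μ)ᴴ = 1) ∧
      (∑ i, (A i μ)ᵀ * (A i μ).map (starRingEnd ℂ) = 1) := by
  have hnormR : (Fintype.card G : ℂ)⁻¹ • ∑ g, UtildeR d U g * ξ * (UtildeR d U g)ᴴ = 1 := by
    rw [← hnorm]
    congr 1
    exact (Fintype.sum_equiv (Equiv.inv G) _ _ fun g =>
      mul_mul_conjTranspose_eq_of_mul_eq_one (Utilde_mul_inv d U g) (hiso g⁻¹)).symm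
  intro μ
  have hU (g : G) : (U μ g : Matrix (Fin (d μ)) (Fin (d μ)) ℂ)ᴴ * U μ g = 1 :=
    Matrix.UnitaryGroup.star_mul_self (U μ g)
  have hdμ : (d μ : ℂ) ≠ 0 := by exact_mod_cast (hd μ).ne'
  have hSnd := partialTraceSnd_eq_of_twirl_one_kronecker_eq_one
    (fun g => conjTranspose_map_starRingEnd_mul (hU g))
    (smul_sum_conj_submatrix_sigmaMk_eq_one (B := fun g ν =>
      1 ⊗ₖ (U ν g : Matrix (Fin (d ν)) (Fin (d ν)) ℂ).map (starRingEnd ℂ)) hnormR μ)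
  have hFst := partialTraceFst_eq_of_twirl_kronecker_one_eq_one hU
    (smul_sum_conj_submatrix_sigmaMk_eq_one (B := fun g ν =>
      (U ν g : Matrix (Fin (d ν)) (Fin (d ν)) ℂ) ⊗ₖ 1) hnorm μ)
  rw [hξ, submatrix_sigmaMk_sum_vecMulVec_sqrt, map_smul, map_sum, Fintype.card_fin] at hSnd hFst
  simp only [partialTraceSnd_vecMulVec_star] at hSnd
  simp only [partialTraceFst_vecMulVec_star] at hFst
  exact ⟨smul_right_injective _ hdμ hSnd, smul_right_injective _ hdμ hFst⟩

/-- Normalization of the blocks of an isotropic seed: if `ξ = Σᵢ |ηᵢ⟩⟨ηᵢ|` with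
`ηᵢ = ⊕_μ √d_μ |η_{iμ}⟩⟩` is isotropic and satisfies the seed normalization
`|G|⁻¹ Σ_ĝ Ũ(ĝ) ξ Ũ(ĝ)† = 1`, then `Σᵢ η_{iμ} η_{iμ}† = I` and `Σᵢ η_{iμ}ᵀ η_{iμ}* = I`
for every `μ`. -/
theorem stmt14 {G : Type} [Group G] [Fintype G] [DecidableEq G]
    {ι : Type} [Fintype ι] [DecidableEq ι] (d : ι → ℕ) (hd : ∀ μ, 0 < d μ)
    (U : ∀ μ, G →* Matrix.unitaryGroup (Fin (d μ)) ℂ)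
    (hirr : ∀ μ, IsIrrep (U μ))
    (hineq : Pairwise fun μ ν => ¬ RepEquiv (U μ) (U ν))
    {r : ℕ} (A : Fin r → ∀ μ, Matrix (Fin (d μ)) (Fin (d μ)) ℂ)
    (ξ : Matrix (Σ μ, Fin (d μ) × Fin (d μ)) (Σ μ, Fin (d μ) × Fin (d μ)) ℂ)
    (hξ : ξ = ∑ i, Matrix.vecMulVec
      (fun q : Σ μ, Fin (d μ) × Fin (d μ) => (Real.sqrt (d q.1) : ℂ) * A i q.1 q.2.1 q.2.2)
      (star fun q : Σ μ, Fin (d μ) × Fin (d μ) =>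
        (Real.sqrt (d q.1) : ℂ) * A i q.1 q.2.1 q.2.2))
    (hiso : ∀ g : G, (Utilde d U g * UtildeR d U g) * ξ * (Utilde d U g * UtildeR d U g)ᴴ = ξ)
    (hnorm : (Fintype.card G : ℂ)⁻¹ •
      ∑ ghat : G, Utilde d U ghat * ξ * (Utilde d U ghat)ᴴ = 1) :
    ∀ μ, (∑ i, A i μ * (A i μ)ᴴ = 1) ∧
      (∑ i, (A i μ)ᵀ * (A i μ).map (starRingEnd ℂ) = 1) :=
  stmt14_general d hd U A ξ hξ hiso hnorm

end
end
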